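/- arXiv:1810.11251 — 3 statements merged into one kernel-verified Lean document; each statement's English description precedes it below -/
import Mathlib

section
/- Let S ⊆ ℕ and let 𝒫_S be the set of primes p such that for every n ∈ S, p ∣ n implies p² ∣ n. Let ℓ ∈ ℤ and k, g ∈ ℕ with g ≥ 1, and suppose ℓ + r·g ∈ S for all integers r with 0 ≤ r < k. Then every prime p ∈ 𝒫_S with 2p ≤ k divides g. -/
/-!
If `p ∤ g`, then `g` is invertible mod `p`, so some term `ℓ + r g` with `r < p` is divisible by `p`,
and so is `ℓ + (r + p) g`. Both terms lie in `S`, hence are divisible by `p²`, and so is their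
difference `p g`; thus `p ∣ g` after all.
-/

theorem Int.exists_lt_dvd_add_mul {p g : ℕ} [NeZero p] (h : g.Coprime p) (ℓ : ℤ) :
    ∃ r < p, (p : ℤ) ∣ ℓ + r * g := by
  refine ⟨((-ℓ : ZMod p) * ↑(ZMod.unitOfCoprime g h)⁻¹).val, ZMod.val_lt _, ?_⟩
  rw [← ZMod.intCast_zmod_eq_zero_iff_dvd]
  push_cast
  rw [ZMod.natCast_val, ZMod.cast_id, ← ZMod.coe_unitOfCoprime g h, mul_assoc, Units.inv_mul]
  ring

theorem dvd_of_sq_dvd_of_sq_dvd_add_mul {R : Type*} [CommRing R] [IsDomain R] {p a g : R}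
    (hp : p ≠ 0) (ha : p ^ 2 ∣ a) (hb : p ^ 2 ∣ a + p * g) : p ∣ g := by
  have hpg : p * p ∣ p * g := by simpa [sq] using dvd_sub hb ha
  exact (mul_dvd_mul_iff_left hp).mp hpg

theorem prime_of_PS_divides_common_difference_general
    (S : Set ℕ) (ℓ : ℤ) (k g : ℕ)
    (hAP : ∀ r : ℕ, r < k → ∃ n ∈ S, (n : ℤ) = ℓ + (r : ℤ) * (g : ℤ))
    (p : ℕ) (hp : p.Prime) (hpS : ∀ n ∈ S, p ∣ n → p ^ 2 ∣ n)
    (hpk : 2 * p ≤ k) : p ∣ g := by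
  by_contra hpg
  have : NeZero p := ⟨hp.ne_zero⟩
  obtain ⟨r, hr, hdvd⟩ :=
    Int.exists_lt_dvd_add_mul (Nat.coprime_comm.mp ((hp.coprime_iff_not_dvd).2 hpg)) ℓ
  have hsq : ∀ n ∈ S, (p : ℤ) ∣ n → (p : ℤ) ^ 2 ∣ n := fun n hn h => by
    exact_mod_cast hpS n hn (by exact_mod_cast h)
  obtain ⟨n₁, hn₁S, hn₁⟩ := hAP r (by omega)
  obtain ⟨n₂, hn₂S, hn₂⟩ := hAP (r + p) (by omega)
  have hn₂' : (n₂ : ℤ) = ℓ + r * g + p * g := by rw [hn₂]; push_cast; ring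
  have h₁ : (p : ℤ) ^ 2 ∣ ℓ + r * g := hn₁ ▸ hsq n₁ hn₁S (hn₁ ▸ hdvd)
  have h₂ : (p : ℤ) ^ 2 ∣ ℓ + r * g + p * g :=
    hn₂' ▸ hsq n₂ hn₂S (hn₂' ▸ dvd_add hdvd (dvd_mul_right _ _))
  exact hpg (by exact_mod_cast dvd_of_sq_dvd_of_sq_dvd_add_mul (by exact_mod_cast hp.ne_zero) h₁ h₂)

/-- If every term of the progression `ℓ, ℓ+g, …, ℓ+(k-1)g` lies in `S ⊆ ℕ`, and `p` is a prime
such that every element of `S` divisible by `p` is divisible by `p²`, and `2p ≤ k`,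
then `p ∣ g`. -/
theorem prime_of_PS_divides_common_difference
    (S : Set ℕ) (ℓ : ℤ) (k g : ℕ) (hg : 1 ≤ g)
    (hAP : ∀ r : ℕ, r < k → ∃ n ∈ S, (n : ℤ) = ℓ + (r : ℤ) * (g : ℤ))
    (p : ℕ) (hp : p.Prime) (hpS : ∀ n ∈ S, p ∣ n → p ^ 2 ∣ n)
    (hpk : 2 * p ≤ k) : p ∣ g :=
  prime_of_PS_divides_common_difference_general S ℓ k g hAP p hp hpS hpk
end

section
/- Let F be an irreducible primitive integral binary quadratic form that is not negative definite, with discriminant d = f²·Δ, where Δ is the discriminant of the splitting field of F and f is the conductor. Then there is a subset T of the unit group (ℤ/Δℤ)ˣ of cardinality φ(|Δ|)/2 such that every odd prime p with (p mod Δ) ∈ T has the property: for all x, y ∈ ℤ, if p ∣ F(x, y) then p² ∣ F(x, y). -/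
/-
Let `χ` be the Kronecker character of `(ℤ/|Δ|ℤ)ˣ`, given on odd `n` by the Jacobi symbol
`J(Δ | n)`; it is well defined by quadratic reciprocity, and it is nontrivial because `Δ ≠ 1`
(otherwise `d = f²` and `F` splits over `ℚ`). Hence `T = χ⁻¹(-1)` has `φ(|Δ|)/2` elements.

For an odd prime `p` with `χ(p) = -1`, `Δ` is a nonsquare mod `p`. If `p ∤ f`, so is `d = f²Δ`,
and `F(x, y) ≡ 0 (mod p)` forces `x ≡ y ≡ 0`. If `p ∣ f`, then `p² ∣ d` and, `F` being primitive,
`p ∤ a` after possibly swapping `a` and `c`; then `4aF = (2ax + by)² - dy²` shows `p ∣ 2ax + by`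
and hence `p² ∣ F(x, y)`.
-/

open MvPolynomial

/-- The binary quadratic form `a·x² + b·x·y + c·y²`, viewed as a polynomial over `ℚ`
(irreducibility of the form means irreducibility of this polynomial). -/
noncomputable def qfPoly (a b c : ℤ) : MvPolynomial (Fin 2) ℚ :=
  C (a : ℚ) * X 0 ^ 2 + C (b : ℚ) * X 0 * X 1 + C (c : ℚ) * X 1 ^ 2

/-- `Δ` is a fundamental discriminant, i.e. the discriminant of a quadratic number field:
either `Δ ≡ 1 (mod 4)` and squarefree, or `Δ = 4m` with `m ≡ 2, 3 (mod 4)` squarefree. -/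
def IsFundamentalDiscriminant (Δ : ℤ) : Prop :=
  (Δ % 4 = 1 ∧ Squarefree Δ) ∨
    (Δ % 4 = 0 ∧ ((Δ / 4) % 4 = 2 ∨ (Δ / 4) % 4 = 3) ∧ Squarefree (Δ / 4))

open scoped NumberTheorySymbols
open Finset

theorem IsFundamentalDiscriminant.emod_four {Δ : ℤ} (h : IsFundamentalDiscriminant Δ) :
    Δ % 4 = 0 ∨ Δ % 4 = 1 := by
  rcases h with ⟨h1, -⟩ | ⟨h0, -, -⟩
  exacts [.inr h1, .inl h0]

theorem IsFundamentalDiscriminant.ne_zero {Δ : ℤ} (h : IsFundamentalDiscriminant Δ) : Δ ≠ 0 := by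
  rcases h with ⟨h, -⟩ | ⟨-, h | h, -⟩ <;> omega

theorem jacobiSym_eq_jacobiSym_natAbs {a : ℤ} {n : ℕ} (ha : Odd a) (hn : Odd n)
    (h : a % 4 = 1 ∨ n % 4 = 1) : J(a | n) = J(n | a.natAbs) := by
  have ha' : Odd a.natAbs := Int.natAbs_odd.mpr ha
  rcases Int.natAbs_eq a with hpos | hneg
  · rw [hpos, Int.natAbs_natCast]
    rcases h with h | h
    · exact jacobiSym.quadratic_reciprocity_one_mod_four (by omega) hn
    · exact jacobiSym.quadratic_reciprocity_one_mod_four' ha' h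
  · rw [hneg, Int.natAbs_neg, Int.natAbs_natCast, jacobiSym.neg _ hn]
    rcases Nat.odd_mod_four_iff.mp (Nat.odd_iff.mp hn) with hn4 | hn4
    · rw [ZMod.χ₄_nat_one_mod_four hn4, one_mul,
        jacobiSym.quadratic_reciprocity_one_mod_four' ha' hn4]
    · rw [ZMod.χ₄_nat_three_mod_four hn4,
        jacobiSym.quadratic_reciprocity_three_mod_four (by omega) hn4, neg_one_mul, neg_neg]

theorem jacobiSym_congr_right {Δ : ℤ} (hΔ : Δ % 4 = 0 ∨ Δ % 4 = 1) {m n : ℕ}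
    (hm : Odd m) (hn : Odd n) (h : m ≡ n [MOD Δ.natAbs]) : J(Δ | m) = J(Δ | n) := by
  rcases hΔ with h0 | h1
  · have reduce : ∀ k : ℕ, Odd k → J(Δ | k) = J(Δ / 4 | k % Δ.natAbs) := fun k hk => by
      rw [← jacobiSym.div_four_left h0 (Nat.odd_iff.mp hk), jacobiSym.mod_right _ hk]
      congr 2
      omega
    rw [reduce m hm, reduce n hn, h]
  · have hΔodd : Odd Δ := Int.odd_iff.mpr (by omega)
    rw [jacobiSym_eq_jacobiSym_natAbs hΔodd hm (.inl h1),
      jacobiSym_eq_jacobiSym_natAbs hΔodd hn (.inl h1)]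
    exact jacobiSym.mod_left' (by exact_mod_cast h)

theorem exists_mod_eight_eq_one_jacobiSym_eq_neg_one {q : ℕ} (hsq : Squarefree q) (hq : Odd q)
    (hq1 : q ≠ 1) : ∃ k : ℕ, k % 8 = 1 ∧ J(k | q) = -1 := by
  set ℓ := q.minFac
  have hℓ : ℓ.Prime := Nat.minFac_prime hq1
  have := Fact.mk hℓ
  obtain ⟨r, hr⟩ : ℓ ∣ q := Nat.minFac_dvd q
  have hℓr : ¬ ℓ ∣ r := fun h => hℓ.not_isUnit (hsq ℓ (hr ▸ mul_dvd_mul_left ℓ h))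
  have hℓ2 : ℓ ≠ 2 := fun h =>
    Nat.not_even_iff_odd.mpr hq (even_iff_two_dvd.mpr (h ▸ Nat.minFac_dvd q))
  have hcop : Nat.Coprime ℓ (8 * r) :=
    Nat.Coprime.mul_right (((Nat.coprime_primes hℓ Nat.prime_two).mpr hℓ2).pow_right 3)
      ((Nat.Prime.coprime_iff_not_dvd hℓ).mpr hℓr)
  obtain ⟨b, hb⟩ := FiniteField.exists_nonsquare (F := ZMod ℓ) (by rwa [ZMod.ringChar_zmod_n])
  obtain ⟨k, hkℓ, hk8r⟩ := Nat.chineseRemainder hcop b.val 1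
  have : NeZero r := ⟨by rintro rfl; simp [hr] at hq⟩
  refine ⟨k, Nat.ModEq.of_mul_right r hk8r, ?_⟩
  have hJℓ : J(k | ℓ) = -1 := by
    rw [ZMod.nonsquare_iff_jacobiSym_eq_neg_one, Int.cast_natCast,
      (ZMod.natCast_eq_natCast_iff _ _ _).mpr hkℓ, ZMod.natCast_zmod_val]
    exact hb
  have hJr : J(k | r) = 1 := by
    rw [jacobiSym.mod_left' (a₂ := 1) (by exact_mod_cast Nat.ModEq.of_mul_left 8 hk8r),
      jacobiSym.one_left]
  rw [hr, jacobiSym.mul_right, hJℓ, hJr, mul_one]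

theorem exists_odd_jacobiSym_eq_neg_one_of_eq_two_pow_mul {Δ q : ℤ} {e : ℕ}
    (hΔ : Δ = 2 ^ e * q) (hq : Odd q) (hsq : Squarefree q) (hq1 : q.natAbs ≠ 1) :
    ∃ n : ℕ, Odd n ∧ J(Δ | n) = -1 := by
  obtain ⟨k, hk8, hk⟩ := exists_mod_eight_eq_one_jacobiSym_eq_neg_one
    (Int.squarefree_natAbs.mpr hsq) (Int.natAbs_odd.mpr hq) hq1
  have hkodd : Odd k := Nat.odd_iff.mpr (by omega)
  refine ⟨k, hkodd, ?_⟩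
  rw [hΔ, jacobiSym.mul_left, jacobiSym.pow_left, jacobiSym.at_two hkodd, ZMod.χ₈_nat_mod_eight,
    hk8, Nat.cast_one, map_one, one_pow, one_mul,
    jacobiSym_eq_jacobiSym_natAbs hq hkodd (.inr (by omega)), hk]

theorem IsFundamentalDiscriminant.exists_odd_jacobiSym_eq_neg_one {Δ : ℤ}
    (hΔ : IsFundamentalDiscriminant Δ) (h1 : Δ ≠ 1) : ∃ n : ℕ, Odd n ∧ J(Δ | n) = -1 := by
  rcases hΔ with ⟨h1mod, hsq⟩ | ⟨h0, h2 | h3, hsq⟩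
  · exact exists_odd_jacobiSym_eq_neg_one_of_eq_two_pow_mul (e := 0) (by ring)
      (Int.odd_iff.mpr (by omega)) hsq (by omega)
  · by_cases hsmall : (Δ / 4 / 2).natAbs = 1
    · rcases (by omega : Δ = 8 ∨ Δ = -8) with rfl | rfl
      · exact ⟨3, by decide, by norm_num⟩
      · exact ⟨5, by decide, by norm_num⟩
    · exact exists_odd_jacobiSym_eq_neg_one_of_eq_two_pow_mul (e := 3) (by norm_num; omega)
        (Int.odd_iff.mpr (by omega)) (hsq.squarefree_of_dvd ⟨2, by omega⟩) hsmall
  · by_cases hsmall : (Δ / 4).natAbs = 1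
    · obtain rfl : Δ = -4 := by omega
      exact ⟨3, by decide, by norm_num⟩
    · exact exists_odd_jacobiSym_eq_neg_one_of_eq_two_pow_mul (e := 2) (by norm_num; omega)
        (Int.odd_iff.mpr (by omega)) hsq hsmall

section KroneckerCharacter

variable {N : ℕ}

/-- If `val u` is even then `N` is odd, since `val u` is coprime to `N`. -/
def oddRep (u : (ZMod N)ˣ) : ℕ :=
  if Even (u : ZMod N).val then (u : ZMod N).val + N else (u : ZMod N).val

theorem odd_oddRep (u : (ZMod N)ˣ) : Odd (oddRep u) := by
  have hcop := ZMod.val_coe_unit_coprime u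
  unfold oddRep
  split_ifs with h
  · refine h.add_odd (Nat.not_even_iff_odd.mp fun hN => ?_)
    have := Nat.dvd_gcd (even_iff_two_dvd.mp h) (even_iff_two_dvd.mp hN)
    rw [hcop] at this
    omega
  · exact Nat.not_even_iff_odd.mp h

theorem natCast_oddRep [NeZero N] (u : (ZMod N)ˣ) : (oddRep u : ZMod N) = u := by
  unfold oddRep
  split_ifs <;> simp

theorem jacobiSym_oddRep {Δ : ℤ} [NeZero Δ.natAbs] (hΔ : Δ % 4 = 0 ∨ Δ % 4 = 1) {n : ℕ} (hn : Odd n)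
    {u : (ZMod Δ.natAbs)ˣ} (h : (n : ZMod Δ.natAbs) = u) : J(Δ | oddRep u) = J(Δ | n) :=
  jacobiSym_congr_right hΔ (odd_oddRep u) hn <|
    (ZMod.natCast_eq_natCast_iff _ _ _).mp (by rw [natCast_oddRep, h])

def kroneckerChar (Δ : ℤ) (hΔ : Δ % 4 = 0 ∨ Δ % 4 = 1) [NeZero Δ.natAbs] :
    (ZMod Δ.natAbs)ˣ →* ℤ where
  toFun u := J(Δ | oddRep u)
  map_one' := by
    rw [jacobiSym_oddRep hΔ odd_one (Nat.cast_one.trans Units.val_one.symm), jacobiSym.one_right]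
  map_mul' u v := by
    have hu := odd_oddRep u
    have hv := odd_oddRep v
    rw [jacobiSym_oddRep hΔ (hu.mul hv) (by push_cast [natCast_oddRep]; rfl),
      jacobiSym.mul_right' _ hu.pos.ne' hv.pos.ne']

variable {Δ : ℤ} [NeZero Δ.natAbs] (hΔ : Δ % 4 = 0 ∨ Δ % 4 = 1)

theorem kroneckerChar_eq_jacobiSym {n : ℕ} (hn : Odd n)
    {u : (ZMod Δ.natAbs)ˣ} (h : (n : ZMod Δ.natAbs) = u) : kroneckerChar Δ hΔ u = J(Δ | n) :=
  jacobiSym_oddRep hΔ hn h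

theorem neg_one_mem_range_kroneckerChar {n : ℕ} (hn : Odd n) (hJ : J(Δ | n) = -1) :
    -1 ∈ Set.range (kroneckerChar Δ hΔ) := by
  have : NeZero n := ⟨hn.pos.ne'⟩
  have hcop : n.Coprime Δ.natAbs := Nat.Coprime.symm <| not_not.mp <|
    mt jacobiSym.eq_zero_iff_not_coprime.mpr (by rw [hJ]; norm_num)
  exact ⟨ZMod.unitOfCoprime n hcop, (kroneckerChar_eq_jacobiSym hΔ hn rfl).trans hJ⟩

end KroneckerCharacter

theorem two_mul_card_filter_eq_neg_one {G : Type*} [Group G] [Fintype G] (χ : G →* ℤ)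
    (h : -1 ∈ Set.range χ) : 2 * #{g | χ g = -1} = Fintype.card G := by
  have hsplit := card_filter_add_card_filter_not (s := univ) (fun g => χ g = -1)
  have hne : ∀ g, ¬ χ g = -1 ↔ χ g = 1 := fun g => by
    rcases Int.isUnit_iff.mp ((Group.isUnit g).map χ) with h | h <;> simp [h]
  simp only [hne] at hsplit
  rw [MonoidHom.card_fiber_eq_of_mem_range χ ⟨1, map_one χ⟩ h, card_univ] at hsplit
  omega

theorem not_isUnit_of_eval_eq_zero {σ R : Type*} [CommRing R] [Nontrivial R]
    {P : MvPolynomial σ R} (v : σ → R) (h : eval v P = 0) : ¬ IsUnit P :=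
  fun hP => not_isUnit_zero (h ▸ hP.map (eval v))

theorem not_irreducible_qfPoly_of_discrim_eq_sq {a b c s : ℤ} (h : discrim a b c = s ^ 2) :
    ¬ Irreducible (qfPoly a b c) := by
  intro hirr
  by_cases ha : a = 0
  · have hfac : qfPoly a b c = X 1 * (C (b : ℚ) * X 0 + C (c : ℚ) * X 1) := by
      simp only [qfPoly, ha, Int.cast_zero, map_zero]
      ring
    rcases hirr.isUnit_or_isUnit hfac with hu | hu
    · exact not_isUnit_of_eval_eq_zero 0 (by simp) hu
    · exact not_isUnit_of_eval_eq_zero ![(c : ℚ), -b] (by simp; ring) hu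
  · have ha' : (a : ℚ) ≠ 0 := by exact_mod_cast ha
    have hq : (b : ℚ) ^ 2 - 4 * a * c = s ^ 2 := by exact_mod_cast h
    set r : ℚ := (b + s) / 2
    set t : ℚ := (b - s) / 2
    have hfac : qfPoly a b c =
        C (1 / (a : ℚ)) * (C (a : ℚ) * X 0 + C r * X 1) * (C (a : ℚ) * X 0 + C t * X 1) :=
      calc qfPoly a b c = C (1 / a * a * a : ℚ) * X 0 ^ 2
              + C (1 / a * (a * r + a * t) : ℚ) * X 0 * X 1
              + C (1 / a * (r * t) : ℚ) * X 1 ^ 2 := by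
            rw [show (1 / a * a * a : ℚ) = a by field_simp,
              show (1 / a * (a * r + a * t) : ℚ) = b by field_simp; ring,
              show (1 / a * (r * t) : ℚ) = c by field_simp; linear_combination hq / 4]
            rfl
        _ = _ := by simp only [map_mul, map_add]; ring
    rcases hirr.isUnit_or_isUnit hfac with hu | hu
    · exact not_isUnit_of_eval_eq_zero ![r, -a] (by simp [mul_comm]) hu
    · exact not_isUnit_of_eval_eq_zero ![t, -a] (by simp; ring) hu

theorem eq_zero_of_not_isSquare_discrim {K : Type*} [Field K] {a b c x y : K}
    (hd : ¬ IsSquare (discrim a b c)) (h : a * x ^ 2 + b * x * y + c * y ^ 2 = 0) :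
    x = 0 ∧ y = 0 := by
  have hy : y = 0 := by
    by_contra hy
    have hroot : a * (x / y * (x / y)) + b * (x / y) + c = 0 := by
      field_simp
      linear_combination h
    exact hd (discrim_eq_sq_of_quadratic_eq_zero hroot ▸ IsSquare.sq _)
  have ha : a ≠ 0 := by
    rintro rfl
    exact hd ⟨b, by simp [discrim, sq]⟩
  subst hy
  exact ⟨by simpa [ha] using h, rfl⟩

theorem sq_dvd_of_sq_dvd_discrim {R : Type*} [CommRing R] {p a b c x y : R} (hp : Prime p)
    (hpa : IsCoprime p (4 * a)) (hd : p ^ 2 ∣ discrim a b c)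
    (h : p ∣ a * x ^ 2 + b * x * y + c * y ^ 2) : p ^ 2 ∣ a * x ^ 2 + b * x * y + c * y ^ 2 := by
  have hid : 4 * a * (a * x ^ 2 + b * x * y + c * y ^ 2) =
      (2 * a * x + b * y) ^ 2 - discrim a b c * y ^ 2 := by rw [discrim]; ring
  have hlin : p ∣ 2 * a * x + b * y := by
    refine hp.dvd_of_dvd_pow (n := 2) ?_
    rw [show (2 * a * x + b * y) ^ 2 = 4 * a * (a * x ^ 2 + b * x * y + c * y ^ 2) +
      discrim a b c * y ^ 2 by rw [hid]; ring]
    exact dvd_add (h.mul_left _) (((dvd_pow_self p two_ne_zero).trans hd).mul_right _)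
  refine hpa.pow_left.dvd_of_dvd_mul_left ?_
  rw [hid]
  exact dvd_sub (pow_dvd_pow_of_dvd hlin 2) (hd.mul_right _)

theorem dvd_of_dvd_of_not_isSquare_discrim {p : ℕ} [Fact p.Prime] {a b c x y : ℤ}
    (hd : ¬ IsSquare ((discrim a b c : ℤ) : ZMod p))
    (h : (p : ℤ) ∣ a * x ^ 2 + b * x * y + c * y ^ 2) : (p : ℤ) ∣ x ∧ (p : ℤ) ∣ y := by
  simp only [← ZMod.intCast_zmod_eq_zero_iff_dvd] at h ⊢
  push_cast [discrim] at h hd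
  exact eq_zero_of_not_isSquare_discrim hd h

theorem sq_dvd_of_sq_dvd_discrim_of_gcd_eq_one {p a b c x y : ℤ} (hp : Prime p) (hp2 : ¬ p ∣ 2)
    (hprim : Int.gcd (Int.gcd a b) c = 1) (hd : p ^ 2 ∣ discrim a b c)
    (h : p ∣ a * x ^ 2 + b * x * y + c * y ^ 2) : p ^ 2 ∣ a * x ^ 2 + b * x * y + c * y ^ 2 := by
  have coprime_four_mul {e : ℤ} (he : ¬ p ∣ e) : IsCoprime p (4 * e) :=
    hp.coprime_iff_not_dvd.mpr fun h4e => (hp.dvd_or_dvd h4e).elim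
      (fun h4 => hp2 (hp.dvd_of_dvd_pow (n := 2) (by norm_num [h4]))) he
  by_cases ha : p ∣ a
  · have hc : ¬ p ∣ c := fun hc => by
      have hb : p ∣ b := hp.dvd_of_dvd_pow (n := 2) <| by
        rw [show b ^ 2 = discrim a b c + 4 * a * c by rw [discrim]; ring]
        exact dvd_add ((dvd_pow_self p two_ne_zero).trans hd) ((ha.mul_left 4).mul_right c)
      have hgcd := Int.dvd_coe_gcd (Int.dvd_coe_gcd ha hb) hc
      rw [hprim, Nat.cast_one] at hgcd
      exact hp.not_isUnit (isUnit_of_dvd_one hgcd)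
    have hswap : a * x ^ 2 + b * x * y + c * y ^ 2 = c * y ^ 2 + b * y * x + a * x ^ 2 := by ring
    rw [hswap] at h ⊢
    exact sq_dvd_of_sq_dvd_discrim hp (coprime_four_mul hc)
      (by rwa [discrim, mul_right_comm, ← discrim]) h
  · exact sq_dvd_of_sq_dvd_discrim hp (coprime_four_mul ha) hd h

theorem sq_dvd_of_dvd_of_not_isSquare {p : ℕ} [hp : Fact p.Prime] (hp2 : p ≠ 2)
    {a b c Δ x y : ℤ} {f : ℕ} (hprim : Int.gcd (Int.gcd a b) c = 1)
    (hd : discrim a b c = f ^ 2 * Δ) (hΔ : ¬ IsSquare (Δ : ZMod p))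
    (h : (p : ℤ) ∣ a * x ^ 2 + b * x * y + c * y ^ 2) :
    (p : ℤ) ^ 2 ∣ a * x ^ 2 + b * x * y + c * y ^ 2 := by
  by_cases hpf : (p : ℤ) ∣ f
  · refine sq_dvd_of_sq_dvd_discrim_of_gcd_eq_one (Nat.prime_iff_prime_int.mp hp.out) ?_ hprim
      (hd ▸ (pow_dvd_pow_of_dvd hpf 2).mul_right Δ) h
    exact_mod_cast mt (Nat.prime_dvd_prime_iff_eq hp.out Nat.prime_two).mp hp2
  · have hf : (f : ZMod p) ≠ 0 := by
      rwa [Ne, ZMod.natCast_eq_zero_iff, ← Int.natCast_dvd_natCast]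
    have hdisc : ¬ IsSquare ((discrim a b c : ℤ) : ZMod p) := by
      rintro ⟨s, hs⟩
      refine hΔ ⟨s / f, ?_⟩
      push_cast [hd] at hs
      field_simp
      linear_combination hs
    obtain ⟨⟨x', rfl⟩, ⟨y', rfl⟩⟩ := dvd_of_dvd_of_not_isSquare_discrim hdisc h
    exact ⟨a * x' ^ 2 + b * x' * y' + c * y' ^ 2, by ring⟩

theorem exists_residue_classes_of_squarefull_primes_general
    (a b c Δ : ℤ) (f : ℕ)
    (hirr : Irreducible (qfPoly a b c))
    (hprim : Int.gcd (Int.gcd a b) c = 1)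
    (hd : b ^ 2 - 4 * a * c = (f : ℤ) ^ 2 * Δ)
    (hfund : IsFundamentalDiscriminant Δ) :
    ∃ T : Finset (ZMod Δ.natAbs)ˣ,
      2 * T.card = Nat.totient Δ.natAbs ∧
      ∀ p : ℕ, p.Prime → Odd p →
        (∃ u ∈ T, ((u : ZMod Δ.natAbs) = (p : ZMod Δ.natAbs))) →
        ∀ x y : ℤ, (p : ℤ) ∣ a * x ^ 2 + b * x * y + c * y ^ 2 →
          (p : ℤ) ^ 2 ∣ a * x ^ 2 + b * x * y + c * y ^ 2 := by
  have hΔ := hfund.emod_four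
  have : NeZero Δ.natAbs := ⟨Int.natAbs_ne_zero.mpr hfund.ne_zero⟩
  have hΔ1 : Δ ≠ 1 := by
    rintro rfl
    exact not_irreducible_qfPoly_of_discrim_eq_sq (s := f) (by rw [discrim, hd, mul_one]) hirr
  obtain ⟨n, hn, hJn⟩ := hfund.exists_odd_jacobiSym_eq_neg_one hΔ1
  refine ⟨({u | kroneckerChar Δ hΔ u = -1} : Finset _), ?_, ?_⟩
  · rw [two_mul_card_filter_eq_neg_one _ (neg_one_mem_range_kroneckerChar hΔ hn hJn),
      ZMod.card_units_eq_totient]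
  · rintro p hp hpodd ⟨u, hu, hpu⟩ x y
    have : Fact p.Prime := ⟨hp⟩
    have hJp : J(Δ | p) = -1 :=
      (kroneckerChar_eq_jacobiSym hΔ hpodd hpu.symm).symm.trans (mem_filter.mp hu).2
    exact sq_dvd_of_dvd_of_not_isSquare (by rintro rfl; exact absurd hpodd (by decide)) hprim hd
      (ZMod.nonsquare_iff_jacobiSym_eq_neg_one.mp hJp)

/-- For an irreducible primitive integral binary quadratic form `F`, not negative definite,
with discriminant `d = f²Δ` (`Δ` the splitting field discriminant), there is a set
`T ⊆ (ℤ/Δℤ)ˣ` of cardinality `φ(|Δ|)/2` such that every odd prime `p` with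
`(p mod Δ) ∈ T` satisfies: `p ∣ F(x,y)` implies `p² ∣ F(x,y)`. -/
theorem exists_residue_classes_of_squarefull_primes
    (a b c Δ : ℤ) (f : ℕ)
    (hirr : Irreducible (qfPoly a b c))
    (hprim : Int.gcd (Int.gcd a b) c = 1)
    (hf : 0 < f)
    (hd : b ^ 2 - 4 * a * c = (f : ℤ) ^ 2 * Δ)
    (hfund : IsFundamentalDiscriminant Δ)
    (hnnd : ¬ ∀ x y : ℤ, (x ≠ 0 ∨ y ≠ 0) → a * x ^ 2 + b * x * y + c * y ^ 2 < 0) :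
    ∃ T : Finset (ZMod Δ.natAbs)ˣ,
      2 * T.card = Nat.totient Δ.natAbs ∧
      ∀ p : ℕ, p.Prime → Odd p →
        (∃ u ∈ T, ((u : ZMod Δ.natAbs) = (p : ZMod Δ.natAbs))) →
        ∀ x y : ℤ, (p : ℤ) ∣ a * x ^ 2 + b * x * y + c * y ^ 2 →
          (p : ℤ) ^ 2 ∣ a * x ^ 2 + b * x * y + c * y ^ 2 :=
  exists_residue_classes_of_squarefull_primes_general a b c Δ f hirr hprim hd hfund
end

section
/- Let K be a number field with ring of integers O_K, let M ⊆ O_K be a ℤ-submodule of finite index generating the ideal O_K M of O_K, and let S = {N_{K/ℚ}(α) / N(O_K M) : α ∈ M} ⊆ ℤ. Let p be a prime such that every prime ideal 𝔭 of O_K lying above p satisfies p² ∣ N(𝔭). Then for every m ∈ S, if p divides m then p² divides m. -/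
/-!
Since `α ∈ M ⊆ O_K M`, the ideal `(α)` factors as `(O_K M) · J`, and comparing norms gives
`|m| = N(J)`. If `p ∣ N(J)`, some prime `𝔭` above `p` divides `J`, so `p² ∣ N(𝔭) ∣ N(J)`.
-/

open NumberField

namespace Ideal

variable {S : Type*} [CommRing S] [IsDedekindDomain S] [Module.Free ℤ S] [Module.Finite ℤ S]

theorem exists_absNorm_eq_natAbs_of_norm_eq_mul {I : Ideal S} (hI : I.absNorm ≠ 0) {α : S}
    (hα : α ∈ I) {m : ℤ} (h : Algebra.norm ℤ α = m * I.absNorm) :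
    ∃ J : Ideal S, J.absNorm = m.natAbs := by
  obtain ⟨J, hJ⟩ : I ∣ span {α} := dvd_iff_le.mpr ((span_singleton_le_iff_mem I).mpr hα)
  refine ⟨J, Nat.eq_of_mul_eq_mul_left (Nat.pos_of_ne_zero hI) ?_⟩
  rw [← map_mul, ← hJ, absNorm_span_singleton, h, Int.natAbs_mul, Int.natAbs_natCast, mul_comm]

theorem sq_dvd_absNorm_of_dvd_absNorm {p : ℕ} (hp : p.Prime)
    (hsq : ∀ P : Ideal S, P.IsPrime → (p : S) ∈ P → p ^ 2 ∣ P.absNorm)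
    {J : Ideal S} (hJ : p ∣ J.absNorm) : p ^ 2 ∣ J.absNorm := by
  obtain ⟨P, hPmax, hPp, hPJ⟩ := exists_isMaximal_dvd_of_dvd_absNorm' hp J hJ
  have hpP : (p : S) ∈ P := by
    simpa using (hPp ▸ mem_span_singleton_self (p : ℤ) : (p : ℤ) ∈ P.under ℤ)
  exact (hsq P hPmax.isPrime hpP).trans (absNorm_dvd_absNorm_of_le (le_of_dvd hPJ))

end Ideal

theorem Submodule.ne_bot_of_index_ne_zero {R M : Type*} [Ring R] [AddCommGroup M] [Module R M]
    [Infinite M] {N : Submodule R M} (hN : N.toAddSubgroup.index ≠ 0) : N ≠ ⊥ := by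
  rintro rfl
  exact hN (by simp [AddSubgroup.index_bot])

/-- Let `K` be a number field, `M ⊆ O_K` a ℤ-submodule of finite index, and
`S = {N_{K/ℚ}(α)/N(O_K·M) : α ∈ M}`. If `p` is a prime such that every prime ideal `𝔭` of
`O_K` above `p` satisfies `p² ∣ N(𝔭)`, then every `m ∈ S` divisible by `p` is divisible
by `p²`. -/
theorem squarefull_primes_for_norm_form_values
    (K : Type) [Field K] [NumberField K]
    (M : Submodule ℤ (𝓞 K)) (hM : M.toAddSubgroup.index ≠ 0)
    (p : ℕ) (hp : p.Prime)
    (hploc : ∀ P : Ideal (𝓞 K), P.IsPrime → (p : 𝓞 K) ∈ P → p ^ 2 ∣ Ideal.absNorm P) :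
    ∀ m : ℤ,
      (∃ α ∈ M, Algebra.norm ℤ α
        = m * (Ideal.absNorm (Ideal.span (M : Set (𝓞 K))) : ℤ)) →
      (p : ℤ) ∣ m → (p : ℤ) ^ 2 ∣ m := by
  rintro m ⟨α, hαM, hnorm⟩ hpm
  have hI : Ideal.absNorm (Ideal.span (M : Set (𝓞 K))) ≠ 0 := by
    simpa [Ideal.absNorm_eq_zero_iff, ← Submodule.eq_bot_iff] using
      Submodule.ne_bot_of_index_ne_zero hM
  obtain ⟨J, hJ⟩ :=
    Ideal.exists_absNorm_eq_natAbs_of_norm_eq_mul hI (Ideal.subset_span hαM) hnorm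
  rw [← Int.natAbs_dvd_natAbs, Int.natAbs_natCast, ← hJ] at hpm
  rw [← Int.natAbs_dvd_natAbs, Int.natAbs_pow, Int.natAbs_natCast, ← hJ]
  exact Ideal.sq_dvd_absNorm_of_dvd_absNorm hp hploc hpm
end
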